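/- arXiv:2401.01484 — 6 statements merged into one kernel-verified Lean document; each statement's English description precedes it below -/
import Mathlib

section
/- Let y, γ ∈ ℝ, v > 0, β > 0, and define α(o) = log(exp(o) + 1) + 1 (SoftPlus activation plus one). Let L(o) = (1/2)·log(π/v) − α(o)·log(Ω) + (α(o) + 1/2)·log((y − γ)²·v + Ω) + log(Real.Gamma(α(o))) − log(Real.Gamma(α(o) + 1/2)), where Ω = 2β(1 + v). Then for every o ∈ ℝ, L has derivative at o equal to [log(1 + v·(γ − y)²/(2β(v + 1))) + ψ(α(o)) − ψ(α(o) + 1/2)] · (1/(1 + exp(−o))), where ψ(x) = deriv Real.Gamma x / Real.Gamma x is the digamma function. -/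
open Real Filter

/-- SoftPlus activation plus one. -/
noncomputable def softplusAlpha (o : ℝ) : ℝ := Real.log (Real.exp o + 1) + 1

/-- The digamma function ψ(x) = Γ'(x)/Γ(x). -/
noncomputable def digamma (x : ℝ) : ℝ := deriv Real.Gamma x / Real.Gamma x

/-!
By the chain rule through `α = softplusAlpha o`: as a function of `α` the loss is affine plus
`log Γ(α) - log Γ(α + 1/2)`, so its `α`-derivative is `log N - log Ω + ψ(α) - ψ(α + 1/2)` with
`N = (y - γ)² v + Ω`, and `log N - log Ω = log (1 + v (γ - y)² / Ω)`; the SoftPlus derivative is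
the logistic sigmoid `1 / (1 + exp (-o))`.
-/

theorem hasDerivAt_log_Gamma {x : ℝ} (hx : ∀ n : ℕ, x ≠ -n) :
    HasDerivAt (fun t => log (Gamma t)) (digamma x) x :=
  (differentiableAt_Gamma hx).hasDerivAt.log (Gamma_ne_zero hx)

theorem hasDerivAt_log_Gamma_of_pos {x : ℝ} (hx : 0 < x) :
    HasDerivAt (fun t => log (Gamma t)) (digamma x) x :=
  hasDerivAt_log_Gamma fun n => (neg_nonpos.mpr n.cast_nonneg).trans_lt hx |>.ne'

theorem one_lt_softplusAlpha (o : ℝ) : 1 < softplusAlpha o := by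
  have : 0 < log (exp o + 1) := log_pos (by linarith [exp_pos o])
  unfold softplusAlpha
  linarith

theorem hasDerivAt_softplusAlpha (o : ℝ) :
    HasDerivAt softplusAlpha (1 / (1 + exp (-o))) o := by
  have hpos : 0 < exp o + 1 := by positivity
  have h := (((hasDerivAt_exp o).add_const 1).log hpos.ne').add_const 1
  refine h.congr_deriv ?_
  rw [exp_neg]
  field_simp

theorem hasDerivAt_ernLoss_alpha (C p q : ℝ) {a : ℝ} (ha : 0 < a) :
    HasDerivAt
      (fun a : ℝ => C - a * p + (a + 1 / 2) * q + log (Gamma a) - log (Gamma (a + 1 / 2)))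
      (q - p + digamma a - digamma (a + 1 / 2)) a := by
  have hlin : HasDerivAt (fun a : ℝ => C - a * p + (a + 1 / 2) * q) (q - p) a := by
    refine (((hasDerivAt_const a C).sub ((hasDerivAt_id a).mul_const p)).add
      (((hasDerivAt_id a).add_const (1 / 2)).mul_const q)).congr_deriv ?_
    ring
  have hshift : HasDerivAt (fun a : ℝ => log (Gamma (a + 1 / 2))) (digamma (a + 1 / 2)) a :=
    (hasDerivAt_log_Gamma_of_pos (by linarith)).comp_add_const a (1 / 2)
  exact (hlin.add (hasDerivAt_log_Gamma_of_pos ha)).sub hshift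

theorem log_one_add_div_eq_log_sub_log {c Ω : ℝ} (hΩ : Ω ≠ 0) (hcΩ : c + Ω ≠ 0) :
    log (1 + c / Ω) = log (c + Ω) - log Ω := by
  rw [← log_div hcΩ hΩ, add_div, div_self hΩ, add_comm]

theorem stmt_0 (y γ v β : ℝ) (hv : 0 < v) (hβ : 0 < β) (o : ℝ) :
    HasDerivAt
      (fun o : ℝ =>
        (1 / 2) * Real.log (Real.pi / v)
          - softplusAlpha o * Real.log (2 * β * (1 + v))
          + (softplusAlpha o + 1 / 2) * Real.log ((y - γ) ^ 2 * v + 2 * β * (1 + v))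
          + Real.log (Real.Gamma (softplusAlpha o))
          - Real.log (Real.Gamma (softplusAlpha o + 1 / 2)))
      ((Real.log (1 + v * (γ - y) ^ 2 / (2 * β * (v + 1)))
          + digamma (softplusAlpha o) - digamma (softplusAlpha o + 1 / 2))
        * (1 / (1 + Real.exp (-o)))) o := by
  have hΩ : 0 < 2 * β * (1 + v) := by positivity
  have hN : 0 < (y - γ) ^ 2 * v + 2 * β * (1 + v) := by positivity
  have hlog : log (1 + v * (γ - y) ^ 2 / (2 * β * (v + 1)))
      = log ((y - γ) ^ 2 * v + 2 * β * (1 + v)) - log (2 * β * (1 + v)) := by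
    rw [← log_one_add_div_eq_log_sub_log hΩ.ne' hN.ne']
    congr 3 <;> ring
  have hα := hasDerivAt_ernLoss_alpha ((1 / 2) * log (π / v)) (log (2 * β * (1 + v)))
    (log ((y - γ) ^ 2 * v + 2 * β * (1 + v))) (zero_lt_one.trans (one_lt_softplusAlpha o))
  rw [hlog]
  exact hα.comp o (hasDerivAt_softplusAlpha o)
end

section
/- Let y, γ ∈ ℝ and define α(o) = log(exp(o) + 1) + 1. Then the function U(o) = −|y − γ| · log(exp(α(o) − 1) − 1) has derivative at every o ∈ ℝ equal to −|y − γ|. In particular the gradient of U with respect to o does not vanish as o → −∞ whenever y ≠ γ. -/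
open Real

lemma key (y γ o : ℝ) :
    -|y - γ| * Real.log (Real.exp (softplusAlpha o - 1) - 1) = -|y - γ| * o := by
  have h : Real.exp (softplusAlpha o - 1) = Real.exp o + 1 := by
    simp [softplusAlpha, Real.exp_log (by positivity : (0:ℝ) < Real.exp o + 1)]
  rw [h]
  simp [Real.log_exp]

theorem stmt_5 (y γ : ℝ) :
    (∀ o : ℝ,
      HasDerivAt
        (fun o : ℝ => -|y - γ| * Real.log (Real.exp (softplusAlpha o - 1) - 1))
        (-|y - γ|) o)
    ∧ (y ≠ γ → ∀ o : ℝ,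
        deriv (fun o : ℝ => -|y - γ| * Real.log (Real.exp (softplusAlpha o - 1) - 1)) o ≠ 0) := by
  have hfun : (fun o : ℝ => -|y - γ| * Real.log (Real.exp (softplusAlpha o - 1) - 1))
      = fun o : ℝ => -|y - γ| * o := funext (key y γ)
  have hderiv : ∀ o : ℝ, HasDerivAt
      (fun o : ℝ => -|y - γ| * Real.log (Real.exp (softplusAlpha o - 1) - 1)) (-|y - γ|) o := by
    intro o
    rw [hfun]
    simpa using (hasDerivAt_id o).const_mul (-|y - γ|)
  refine ⟨hderiv, fun hne o => ?_⟩
  rw [(hderiv o).deriv]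
  simp [sub_eq_zero, hne]
end

section
/- Let n ≥ 1 be a natural number, r > 0, s ∈ ℝ, let A be an n×n real matrix with det A ≠ 0, and let w ∈ ℝⁿ. Define ν(p) = n(n+5)/2 + tanh(p)·n(n+3)/2 + 1, M(ν) = A·Aᵀ + (r + ν)⁻¹ · (w wᵀ) (where w wᵀ is the outer product), and H(p) = log(Real.Gamma((ν(p) − n + 1)/2)) − log(Real.Gamma((ν(p) + 1)/2)) + (n/2)·log(r + ν(p)) − ν(p)·s + ((ν(p) + 1)/2)·log(det M(ν(p))). Then H is differentiable on ℝ and its derivative tends to 0 as p → −∞. -/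
open Real Filter Matrix

/-- Degrees-of-freedom parameter produced via the tanh activation. -/
noncomputable def nuParam (n : ℕ) (p : ℝ) : ℝ :=
  (n : ℝ) * (n + 5) / 2 + Real.tanh p * ((n : ℝ) * (n + 3) / 2) + 1

/-!
The loss is `G ∘ ν` with `G = mernLoss`, and `G` is real analytic on `(n, ∞)`, which contains the
range `[n + 1, ∞)` of `ν`: there the Gamma arguments and `r + ν` are positive, and
`A Aᵀ + (r + ν)⁻¹ w wᵀ` is positive definite, so its determinant is positive. By the chain rule
`H' p = G'(ν p) · (1 - tanh² p) · n(n+3)/2`. As `p → -∞`, `ν p → n + 1`, where `G'` is continuous,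
while `tanh p → -1` kills the second factor.
-/

open Topology

namespace Real

theorem hasDerivAt_tanh (x : ℝ) : HasDerivAt tanh (1 - tanh x ^ 2) x := by
  have hcosh : cosh x ≠ 0 := (cosh_pos x).ne'
  have h := (hasDerivAt_sinh x).div (hasDerivAt_cosh x) hcosh
  rw [show tanh = sinh / cosh from funext tanh_eq_sinh_div_cosh]
  refine h.congr_deriv ?_
  rw [Pi.div_apply]
  field_simp

theorem tendsto_tanh_atBot : Tendsto tanh atBot (𝓝 (-1)) := by
  have hexp : Tendsto (fun x => exp x ^ 2) atBot (𝓝 0) := by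
    simpa using tendsto_exp_atBot.pow 2
  have key : ∀ x, tanh x = (exp x ^ 2 - 1) / (exp x ^ 2 + 1) := fun x => by
    rw [tanh_eq_sinh_div_cosh, sinh_eq, cosh_eq, exp_neg]
    field_simp
  have h := (hexp.sub_const 1).div (hexp.add_const 1) (by norm_num)
  rw [zero_sub, zero_add, div_one] at h
  exact h.congr fun x => (key x).symm

theorem analyticAt_Gamma {x : ℝ} (hx : 0 < x) : AnalyticAt ℝ Gamma x := by
  have hopen : IsOpen {z : ℂ | 0 < z.re} := isOpen_lt continuous_const Complex.continuous_re
  have hdiff : DifferentiableOn ℂ Complex.Gamma {z : ℂ | 0 < z.re} := fun z hz =>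
    (Complex.differentiableAt_Gamma z fun m hm => by
      simp only [Set.mem_ofPred_eq, hm, Complex.neg_re, Complex.natCast_re] at hz
      linarith [m.cast_nonneg (α := ℝ)]).differentiableWithinAt
  have h := (hdiff.analyticAt (hopen.mem_nhds (by simpa using hx))).re_ofReal
  simpa only [Complex.Gamma_ofReal, Complex.ofReal_re] using h

end Real

theorem Matrix.analyticAt_det {𝕜 E ι : Type*} [NontriviallyNormedField 𝕜] [NormedAddCommGroup E]
    [NormedSpace 𝕜 E] [Fintype ι] [DecidableEq ι] {f : E → Matrix ι ι 𝕜} {x : E}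
    (hf : ∀ i j, AnalyticAt 𝕜 (fun y => f y i j) x) : AnalyticAt 𝕜 (fun y => (f y).det) x := by
  simp only [det_apply']
  fun_prop

theorem Matrix.posDef_mul_transpose_add_smul_vecMulVec {ι : Type*} [Fintype ι] [DecidableEq ι]
    {A : Matrix ι ι ℝ} (hA : A.det ≠ 0) (w : ι → ℝ) {t : ℝ} (ht : 0 ≤ t) :
    (A * Aᵀ + t • vecMulVec w w).PosDef := by
  have hAAt : (A * Aᵀ).PosDef := PosDef.mul_conjTranspose_self A <|
    vecMul_injective_iff_isUnit.2 <| (isUnit_iff_isUnit_det A).2 (isUnit_iff_ne_zero.2 hA)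
  have hww : (vecMulVec w w).PosSemidef := by
    simpa using posSemidef_vecMulVec_self_star w
  exact hAAt.add_posSemidef (hww.smul ht)

noncomputable def mernLoss (n : ℕ) (r s : ℝ) (A : Matrix (Fin n) (Fin n) ℝ) (w : Fin n → ℝ)
    (ν : ℝ) : ℝ :=
  Real.log (Real.Gamma ((ν - n + 1) / 2)) - Real.log (Real.Gamma ((ν + 1) / 2))
    + ((n : ℝ) / 2) * Real.log (r + ν) - ν * s
    + ((ν + 1) / 2) * Real.log ((A * Aᵀ + (r + ν)⁻¹ • vecMulVec w w).det)

theorem analyticAt_mernLoss {n : ℕ} {r : ℝ} (s : ℝ) {A : Matrix (Fin n) (Fin n) ℝ}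
    (hA : A.det ≠ 0) (w : Fin n → ℝ) {ν : ℝ} (hν : (n : ℝ) - 1 < ν) (hrν : 0 < r + ν) :
    AnalyticAt ℝ (mernLoss n r s A w) ν := by
  have hΓ₁ : 0 < (ν - n + 1) / 2 := by linarith
  have hΓ₂ : 0 < (ν + 1) / 2 := by linarith [n.cast_nonneg (α := ℝ)]
  have hdet : AnalyticAt ℝ (fun x => (A * Aᵀ + (r + x)⁻¹ • vecMulVec w w).det) ν :=
    analyticAt_det fun i j => by
      simp only [Matrix.add_apply, Matrix.smul_apply, smul_eq_mul]
      fun_prop (disch := exact hrν.ne')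
  have hdet_pos := (posDef_mul_transpose_add_smul_vecMulVec hA w (inv_pos.2 hrν).le).det_pos
  have hlogΓ₁ : AnalyticAt ℝ (fun x => Real.log (Gamma ((x - n + 1) / 2))) ν :=
    ((Real.analyticAt_Gamma hΓ₁).comp (f := fun x : ℝ => (x - n + 1) / 2) (by fun_prop)).log
      (Gamma_pos_of_pos hΓ₁)
  have hlogΓ₂ : AnalyticAt ℝ (fun x => Real.log (Gamma ((x + 1) / 2))) ν :=
    ((Real.analyticAt_Gamma hΓ₂).comp (f := fun x : ℝ => (x + 1) / 2) (by fun_prop)).log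
      (Gamma_pos_of_pos hΓ₂)
  have hlog_r : AnalyticAt ℝ (fun x => Real.log (r + x)) ν :=
    (analyticAt_const.add analyticAt_id).log hrν
  have hlogdet := hdet.log hdet_pos
  unfold mernLoss
  fun_prop

theorem tendsto_deriv_comp_of_tendsto_deriv_zero {f g g' : ℝ → ℝ} {l : Filter ℝ} {a : ℝ}
    (hf : ∀ x, DifferentiableAt ℝ f (g x)) (hf' : ContinuousAt (deriv f) a)
    (hg : ∀ x, HasDerivAt g (g' x) x) (hga : Tendsto g l (𝓝 a)) (hg' : Tendsto g' l (𝓝 0)) :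
    Tendsto (deriv (f ∘ g)) l (𝓝 0) := by
  have hchain : deriv (f ∘ g) = fun x => deriv f (g x) * g' x :=
    funext fun x => ((hf x).hasDerivAt.comp x (hg x)).deriv
  simpa [hchain] using (hf'.tendsto.comp hga).mul hg'

theorem add_one_le_nuParam (n : ℕ) (p : ℝ) : (n : ℝ) + 1 ≤ nuParam n p := by
  have hcoef : 0 ≤ (n : ℝ) * (n + 3) / 2 := by positivity
  unfold nuParam
  nlinarith [neg_one_lt_tanh p]

theorem hasDerivAt_nuParam (n : ℕ) (p : ℝ) :
    HasDerivAt (nuParam n) ((1 - tanh p ^ 2) * ((n : ℝ) * (n + 3) / 2)) p :=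
  (((hasDerivAt_tanh p).mul_const _).const_add _).add_const 1

theorem tendsto_nuParam_atBot (n : ℕ) : Tendsto (nuParam n) atBot (𝓝 ((n : ℝ) + 1)) := by
  have h := ((tendsto_tanh_atBot.mul_const ((n : ℝ) * (n + 3) / 2)).const_add
    ((n : ℝ) * (n + 5) / 2)).add_const 1
  rwa [show (n : ℝ) * (n + 5) / 2 + -1 * ((n : ℝ) * (n + 3) / 2) + 1 = n + 1 by ring] at h

theorem stmt_8_general (n : ℕ) (r s : ℝ) (hr : 0 < r)
    (A : Matrix (Fin n) (Fin n) ℝ) (hA : A.det ≠ 0) (w : Fin n → ℝ) :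
    Differentiable ℝ (fun p : ℝ =>
      Real.log (Real.Gamma ((nuParam n p - n + 1) / 2))
        - Real.log (Real.Gamma ((nuParam n p + 1) / 2))
        + ((n : ℝ) / 2) * Real.log (r + nuParam n p)
        - nuParam n p * s
        + ((nuParam n p + 1) / 2) *
            Real.log ((A * Aᵀ + (r + nuParam n p)⁻¹ • Matrix.vecMulVec w w).det))
    ∧ Tendsto
        (deriv (fun p : ℝ =>
          Real.log (Real.Gamma ((nuParam n p - n + 1) / 2))
            - Real.log (Real.Gamma ((nuParam n p + 1) / 2))
            + ((n : ℝ) / 2) * Real.log (r + nuParam n p)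
            - nuParam n p * s
            + ((nuParam n p + 1) / 2) *
                Real.log ((A * Aᵀ + (r + nuParam n p)⁻¹ • Matrix.vecMulVec w w).det)))
        atBot (nhds 0) := by
  have hloss : ∀ ν, (n : ℝ) < ν → AnalyticAt ℝ (mernLoss n r s A w) ν :=
    fun ν hν => analyticAt_mernLoss s hA w (by linarith) (by linarith)
  have hloss_nu : ∀ p, DifferentiableAt ℝ (mernLoss n r s A w) (nuParam n p) :=
    fun p => (hloss _ (by linarith [add_one_le_nuParam n p])).differentiableAt
  have hdnu : Tendsto (fun p => (1 - tanh p ^ 2) * ((n : ℝ) * (n + 3) / 2)) atBot (𝓝 0) := by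
    simpa using ((tendsto_tanh_atBot.pow 2).const_sub 1).mul_const ((n : ℝ) * (n + 3) / 2)
  refine ⟨fun p => (hloss_nu p).comp p (hasDerivAt_nuParam n p).differentiableAt, ?_⟩
  exact tendsto_deriv_comp_of_tendsto_deriv_zero hloss_nu
    (hloss _ (by linarith)).deriv.continuousAt (hasDerivAt_nuParam n) (tendsto_nuParam_atBot n) hdnu

theorem stmt_8 (n : ℕ) (hn : 1 ≤ n) (r s : ℝ) (hr : 0 < r)
    (A : Matrix (Fin n) (Fin n) ℝ) (hA : A.det ≠ 0) (w : Fin n → ℝ) :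
    Differentiable ℝ (fun p : ℝ =>
      Real.log (Real.Gamma ((nuParam n p - n + 1) / 2))
        - Real.log (Real.Gamma ((nuParam n p + 1) / 2))
        + ((n : ℝ) / 2) * Real.log (r + nuParam n p)
        - nuParam n p * s
        + ((nuParam n p + 1) / 2) *
            Real.log ((A * Aᵀ + (r + nuParam n p)⁻¹ • Matrix.vecMulVec w w).det))
    ∧ Tendsto
        (deriv (fun p : ℝ =>
          Real.log (Real.Gamma ((nuParam n p - n + 1) / 2))
            - Real.log (Real.Gamma ((nuParam n p + 1) / 2))
            + ((n : ℝ) / 2) * Real.log (r + nuParam n p)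
            - nuParam n p * s
            + ((nuParam n p + 1) / 2) *
                Real.log ((A * Aᵀ + (r + nuParam n p)⁻¹ • Matrix.vecMulVec w w).det)))
        atBot (nhds 0) :=
  stmt_8_general n r s hr A hA w
end

section
/- Let n ≥ 1 be a natural number, y, γ ∈ ℝ, and define ν(p) = n(n+5)/2 + tanh(p)·n(n+3)/2 + 1. Then the function U(p) = −(1/2)·|y − γ|·log((n² + 3n)/(n² + 4n + 1 − ν(p)) − 1) has derivative at every p ∈ ℝ equal to −|y − γ|. In particular the gradient of U with respect to p does not vanish as p → −∞ whenever y ≠ γ. -/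
open Real

/-
With `A = n² + 3n` the activation gives `n² + 4n + 1 - ν(p) = (A / 2)(1 - tanh p)`, so the argument
of the logarithm is `(1 + tanh p) / (1 - tanh p)`, whose logarithm is `2 artanh (tanh p) = 2p`.
Hence the regularizer is the linear function `p ↦ -|y - γ| p`.
-/

theorem Real.log_one_add_tanh_div_one_sub_tanh (x : ℝ) :
    log ((1 + tanh x) / (1 - tanh x)) = 2 * x := by
  have h := artanh_eq_half_log ⟨(neg_one_lt_tanh x).le, (tanh_lt_one x).le⟩
  rw [artanh_tanh] at h
  linarith

theorem sub_nuParam (n : ℕ) (p : ℝ) :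
    (n : ℝ) ^ 2 + 4 * n + 1 - nuParam n p = ((n : ℝ) ^ 2 + 3 * n) / 2 * (1 - tanh p) := by
  unfold nuParam
  ring

theorem div_sub_nuParam_sub_one {n : ℕ} (hn : n ≠ 0) (p : ℝ) :
    ((n : ℝ) ^ 2 + 3 * n) / ((n : ℝ) ^ 2 + 4 * n + 1 - nuParam n p) - 1
      = (1 + tanh p) / (1 - tanh p) := by
  have hA : (n : ℝ) ^ 2 + 3 * n ≠ 0 := by positivity
  have hT : 1 - tanh p ≠ 0 := (sub_pos.2 (tanh_lt_one p)).ne'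
  rw [sub_nuParam]
  field_simp
  ring

theorem stmt_10 (n : ℕ) (hn : 1 ≤ n) (y γ : ℝ) :
    (∀ p : ℝ,
      HasDerivAt
        (fun p : ℝ => -(1 / 2) * |y - γ| *
          Real.log (((n : ℝ) ^ 2 + 3 * n) / ((n : ℝ) ^ 2 + 4 * n + 1 - nuParam n p) - 1))
        (-|y - γ|) p)
    ∧ (y ≠ γ → ∀ p : ℝ,
        deriv
          (fun p : ℝ => -(1 / 2) * |y - γ| *
            Real.log (((n : ℝ) ^ 2 + 3 * n) / ((n : ℝ) ^ 2 + 4 * n + 1 - nuParam n p) - 1))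
          p ≠ 0) := by
  have hlinear : (fun p : ℝ => -(1 / 2) * |y - γ| *
      Real.log (((n : ℝ) ^ 2 + 3 * n) / ((n : ℝ) ^ 2 + 4 * n + 1 - nuParam n p) - 1))
      = fun p : ℝ => -|y - γ| * p := by
    funext p
    rw [div_sub_nuParam_sub_one (by omega) p, log_one_add_tanh_div_one_sub_tanh]
    ring
  have hderiv (p : ℝ) : HasDerivAt (fun p : ℝ => -|y - γ| * p) (-|y - γ|) p := by
    simpa using (hasDerivAt_id p).const_mul (-|y - γ|)
  refine ⟨fun p => hlinear ▸ hderiv p, fun hne p => ?_⟩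
  rw [hlinear, (hderiv p).deriv, neg_ne_zero, abs_ne_zero, sub_ne_zero]
  exact hne
end

section
/- Let y, γ ∈ ℝ, v > 0, β > 0, λ ∈ ℝ, and define α(o) = max(0, o) + 1 (ReLU activation plus one). Let L(o) = (1/2)·log(π/v) − α(o)·log(Ω) + (α(o) + 1/2)·log((y − γ)²·v + Ω) + log(Real.Gamma(α(o))) − log(Real.Gamma(α(o) + 1/2)) with Ω = 2β(1 + v), and R(o) = |y − γ|·(2v + α(o)). Then for every o < 0, the total loss o ↦ L(o) + λ·R(o) has derivative 0 at o. -/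
open Real

/-- ReLU activation plus one. -/
noncomputable def reluAlpha (o : ℝ) : ℝ := max 0 o + 1

theorem stmt_11 (y γ v β lam : ℝ) (hv : 0 < v) (hβ : 0 < β) (o : ℝ) (ho : o < 0) :
    HasDerivAt
      (fun o : ℝ =>
        ((1 / 2) * Real.log (Real.pi / v)
          - reluAlpha o * Real.log (2 * β * (1 + v))
          + (reluAlpha o + 1 / 2) * Real.log ((y - γ) ^ 2 * v + 2 * β * (1 + v))
          + Real.log (Real.Gamma (reluAlpha o))
          - Real.log (Real.Gamma (reluAlpha o + 1 / 2)))
        + lam * (|y - γ| * (2 * v + reluAlpha o)))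
      0 o := by
  have hconst : HasDerivAt (fun _ : ℝ =>
      ((1 / 2) * Real.log (Real.pi / v)
        - (1 : ℝ) * Real.log (2 * β * (1 + v))
        + ((1 : ℝ) + 1 / 2) * Real.log ((y - γ) ^ 2 * v + 2 * β * (1 + v))
        + Real.log (Real.Gamma (1 : ℝ))
        - Real.log (Real.Gamma ((1 : ℝ) + 1 / 2)))
      + lam * (|y - γ| * (2 * v + (1 : ℝ)))) 0 o := hasDerivAt_const _ _
  refine hconst.congr_of_eventuallyEq ?_
  filter_upwards [Iio_mem_nhds ho] with x hx
  have : reluAlpha x = 1 := by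
    simp [reluAlpha, max_eq_left (le_of_lt (Set.mem_Iio.mp hx))]
  rw [this]
end

section
/- Let y, γ ∈ ℝ, v > 0, β > 0, λ ∈ ℝ, and define α(o) = exp(o) + 1 (exponential activation plus one). Let L(o) = (1/2)·log(π/v) − α(o)·log(Ω) + (α(o) + 1/2)·log((y − γ)²·v + Ω) + log(Real.Gamma(α(o))) − log(Real.Gamma(α(o) + 1/2)) with Ω = 2β(1 + v), and R(o) = |y − γ|·(2v + α(o)). Then the derivative of the total loss o ↦ L(o) + λ·R(o) tends to 0 as o → −∞. -/
/-!
As a function of `α`, the loss `F α` is `C¹` near `α = 1`: `Γ` is smooth and nonzero there,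
since `1 / Γ` is entire. By the chain rule the derivative in `o` is `F' (exp o + 1) * exp o`,
which tends to `F' 1 * 0 = 0` as `o → -∞`.
-/

open Real Filter

/-- Exponential activation plus one. -/
noncomputable def expAlpha (o : ℝ) : ℝ := Real.exp o + 1

open Topology

namespace Real

theorem contDiff_inv_Gamma {n : WithTop ℕ∞} : ContDiff ℝ n fun x : ℝ => (Gamma x)⁻¹ := by
  have hℂ : ContDiff ℂ n fun s : ℂ => (Complex.Gamma s)⁻¹ :=
    Complex.differentiable_one_div_Gamma.contDiff
  convert Complex.reCLM.contDiff.comp ((hℂ.restrict_scalars ℝ).comp Complex.ofRealCLM.contDiff)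
    using 1
  ext x
  simp [Complex.Gamma_ofReal, ← Complex.ofReal_inv]

theorem contDiffAt_log_Gamma {n : WithTop ℕ∞} {x : ℝ} (hx : ∀ m : ℕ, x ≠ -m) :
    ContDiffAt ℝ n (fun x => log (Gamma x)) x := by
  have hΓ : Gamma x ≠ 0 := Gamma_ne_zero hx
  have hinv : ContDiffAt ℝ n (fun x => ((Gamma x)⁻¹)⁻¹) x :=
    contDiff_inv_Gamma.contDiffAt.inv (inv_ne_zero hΓ)
  simp only [inv_inv] at hinv
  exact hinv.log hΓ

end Real

theorem tendsto_deriv_comp_exp_add_atBot {F : ℝ → ℝ} {c : ℝ} (hF : ContDiffAt ℝ 1 F c) :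
    Tendsto (deriv fun o => F (exp o + c)) atBot (𝓝 0) := by
  have hinner : Tendsto (fun o => exp o + c) atBot (𝓝 c) := by
    simpa using tendsto_exp_atBot.add_const c
  have hcont : ContinuousAt (deriv F) c :=
    (hF.continuousAt_fderiv one_ne_zero).clm_apply continuousAt_const
  have hchain : ∀ᶠ o in atBot,
      deriv F (exp o + c) * exp o = deriv (fun o => F (exp o + c)) o := by
    filter_upwards [hinner.eventually (hF.eventually (by simp))] with o ho
    exact ((ho.differentiableAt one_ne_zero).hasDerivAt.comp o
      ((hasDerivAt_exp o).add_const c)).deriv.symm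
  simpa using ((hcont.tendsto.comp hinner).mul tendsto_exp_atBot).congr' hchain

theorem stmt_12_general (y γ v β lam : ℝ) :
    Tendsto
      (deriv (fun o : ℝ =>
        ((1 / 2) * Real.log (Real.pi / v)
          - expAlpha o * Real.log (2 * β * (1 + v))
          + (expAlpha o + 1 / 2) * Real.log ((y - γ) ^ 2 * v + 2 * β * (1 + v))
          + Real.log (Real.Gamma (expAlpha o))
          - Real.log (Real.Gamma (expAlpha o + 1 / 2)))
        + lam * (|y - γ| * (2 * v + expAlpha o))))
      atBot (nhds 0) := by
  have hpos : ∀ x : ℝ, 0 < x → ∀ m : ℕ, x ≠ -m := fun x hx m =>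
    ((neg_nonpos.2 m.cast_nonneg).trans_lt hx).ne'
  have hF : ContDiffAt ℝ 1 (fun a : ℝ =>
      ((1 / 2) * log (π / v) - a * log (2 * β * (1 + v))
        + (a + 1 / 2) * log ((y - γ) ^ 2 * v + 2 * β * (1 + v))
        + log (Gamma a) - log (Gamma (a + 1 / 2)))
      + lam * (|y - γ| * (2 * v + a))) 1 := by
    have hΓ₁ := contDiffAt_log_Gamma (n := 1) (hpos 1 one_pos)
    have hΓ₂ := (contDiffAt_log_Gamma (n := 1) (hpos (1 + 1 / 2) (by norm_num))).comp
      (1 : ℝ) (contDiffAt_id.add contDiffAt_const)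
    fun_prop
  exact tendsto_deriv_comp_exp_add_atBot hF

theorem stmt_12 (y γ v β lam : ℝ) (hv : 0 < v) (hβ : 0 < β) :
    Tendsto
      (deriv (fun o : ℝ =>
        ((1 / 2) * Real.log (Real.pi / v)
          - expAlpha o * Real.log (2 * β * (1 + v))
          + (expAlpha o + 1 / 2) * Real.log ((y - γ) ^ 2 * v + 2 * β * (1 + v))
          + Real.log (Real.Gamma (expAlpha o))
          - Real.log (Real.Gamma (expAlpha o + 1 / 2)))
        + lam * (|y - γ| * (2 * v + expAlpha o))))
      atBot (nhds 0) :=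
  stmt_12_general y γ v β lam
end
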